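/- Let α > 0 and k ∈ ℝ. Let u : ℝ → ℝ be continuously differentiable with u and u′ square-integrable on ℝ and u(y) → 0 as |y| → ∞. Then for every x ∈ ℝ, both one-sided bounds hold: (1/(2α))∫_{−∞}^{x} e^{(y−x)/α} ((α²/2)u′(y)² + (u(y)+k)²) dy ≥ (u(x)+k)²/4 and (1/(2α))∫_{x}^{∞} e^{(x−y)/α} ((α²/2)u′(y)² + (u(y)+k)²) dy ≥ (u(x)+k)²/4. -/

import Mathlib

/-!
With `e y = exp ((y - x) / α)`, the function `F = e · (u + k)²` vanishes at `-∞`, equals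
`(u x + k)²` at `x`, and has derivative `e · ((u + k)² / α + 2 (u + k) u')`. By
`2ab ≤ a² / α + α b²` this derivative is at most `(2 / α) · e · ((α² / 2) u'² + (u + k)²)`,
so integrating over `(-∞, x]` gives the bound on the left; the bound on the right is the one on
the left for `y ↦ u (-y)`.
-/

open MeasureTheory Filter Set Real Topology

section

variable {α : ℝ}

theorem abs_two_mul_le_div_add_mul (hα : 0 < α) (a b : ℝ) :
    |2 * a * b| ≤ a ^ 2 / α + α * b ^ 2 := by
  have hsub : a ^ 2 / α + α * b ^ 2 - 2 * a * b = (a - α * b) ^ 2 / α := by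
    field_simp; ring
  have hadd : a ^ 2 / α + α * b ^ 2 + 2 * a * b = (a + α * b) ^ 2 / α := by
    field_simp; ring
  rw [abs_le]
  constructor <;> linarith [div_nonneg (sq_nonneg (a - α * b)) hα.le,
    div_nonneg (sq_nonneg (a + α * b)) hα.le]

theorem integrableOn_exp_sub_div_Iic (hα : 0 < α) (x c : ℝ) :
    IntegrableOn (fun y => exp ((y - x) / α)) (Iic c) := by
  refine IntegrableOn.congr_fun ((integrableOn_exp_mul_Iic (inv_pos.2 hα) c).mul_const
    (exp (-x / α))) (fun y _ => ?_) measurableSet_Iic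
  rw [← exp_add, sub_div, sub_eq_add_neg, neg_div, inv_mul_eq_div]

theorem sq_le_two_div_mul_integral_Iic (hα : 0 < α) {w w' : ℝ → ℝ} {L x : ℝ}
    (hw : ∀ y ∈ Iic x, HasDerivAt w (w' y) y) (hlim : Tendsto w atBot (𝓝 L))
    (hint : IntegrableOn
      (fun y => exp ((y - x) / α) * ((α ^ 2 / 2) * w' y ^ 2 + w y ^ 2)) (Iic x)) :
    w x ^ 2 ≤ 2 / α * ∫ y in Iic x, exp ((y - x) / α) * ((α ^ 2 / 2) * w' y ^ 2 + w y ^ 2) := by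
  set F : ℝ → ℝ := fun y => exp ((y - x) / α) * w y ^ 2
  set F' : ℝ → ℝ := fun y => exp ((y - x) / α) * (w y ^ 2 / α + 2 * w y * w' y)
  have hF : ∀ y ∈ Iic x, HasDerivAt F (F' y) y := fun y hy => by
    have he : HasDerivAt (fun z => exp ((z - x) / α)) (exp ((y - x) / α) * (1 / α)) y :=
      (((hasDerivAt_id y).sub_const x).div_const α).exp
    have hw2 : HasDerivAt (fun z => w z ^ 2) (2 * w y * w' y) y := by
      simpa using (hw y hy).fun_pow 2
    refine (he.fun_mul hw2).congr_deriv ?_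
    ring
  have hF'_le : ∀ y, |F' y| ≤ 2 / α * (exp ((y - x) / α) * ((α ^ 2 / 2) * w' y ^ 2 + w y ^ 2)) :=
    fun y => calc
      |F' y| ≤ exp ((y - x) / α) * (w y ^ 2 / α + |2 * w y * w' y|) := by
        rw [abs_mul, abs_of_pos (exp_pos _)]
        gcongr
        exact (abs_add_le _ _).trans_eq (by rw [abs_of_nonneg (by positivity)])
      _ ≤ exp ((y - x) / α) * (w y ^ 2 / α + (w y ^ 2 / α + α * w' y ^ 2)) := by
        gcongr; exact abs_two_mul_le_div_add_mul hα _ _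
      _ = _ := by field_simp; ring
  have hF'_int : IntegrableOn F' (Iic x) := by
    refine (hint.const_mul (2 / α)).mono' ?_ (Eventually.of_forall fun y => hF'_le y)
    refine (measurable_deriv F).aestronglyMeasurable.congr ?_
    exact (ae_restrict_iff' measurableSet_Iic).2 (Eventually.of_forall fun y hy => (hF y hy).deriv)
  have hF_lim : Tendsto F atBot (𝓝 0) := by
    have he : Tendsto (fun y => exp ((y - x) / α)) atBot (𝓝 0) :=
      tendsto_exp_atBot.comp ((tendsto_atBot_add_const_right _ (-x) tendsto_id).atBot_div_const hα)
    simpa using he.mul (hlim.pow 2)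
  calc w x ^ 2 = ∫ y in Iic x, F' y := by
        rw [integral_Iic_of_hasDerivAt_of_tendsto' hF hF'_int hF_lim]; simp [F]
    _ ≤ ∫ y in Iic x, 2 / α * (exp ((y - x) / α) * ((α ^ 2 / 2) * w' y ^ 2 + w y ^ 2)) :=
        setIntegral_mono hF'_int (hint.const_mul _) fun y => (le_abs_self _).trans (hF'_le y)
    _ = _ := integral_const_mul _ _

theorem integrableOn_exp_mul_energy_Iic (hα : 0 < α) (k x : ℝ) {u u' : ℝ → ℝ}
    (hu : Continuous u) (hu_sq : Integrable fun y => u y ^ 2)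
    (hu'_sq : Integrable fun y => u' y ^ 2) :
    IntegrableOn (fun y => exp ((y - x) / α) * ((α ^ 2 / 2) * u' y ^ 2 + (u y + k) ^ 2))
      (Iic x) := by
  have hdom : IntegrableOn
      (fun y => (α ^ 2 / 2) * u' y ^ 2 + 2 * u y ^ 2 + 2 * k ^ 2 * exp ((y - x) / α)) (Iic x) :=
    ((hu'_sq.const_mul _).add (hu_sq.const_mul 2)).integrableOn.add
      ((integrableOn_exp_sub_div_Iic hα x x).const_mul _)
  refine hdom.mono' ?_ ((ae_restrict_iff' measurableSet_Iic).2 (Eventually.of_forall fun y hy => ?_))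
  · exact (by fun_prop : Continuous fun y => exp ((y - x) / α)).aestronglyMeasurable.mul
      ((hu'_sq.1.const_mul _).add ((hu.add continuous_const).pow 2).aestronglyMeasurable).restrict
  · have he_le : exp ((y - x) / α) ≤ 1 :=
      exp_le_one_iff.2 (div_nonpos_of_nonpos_of_nonneg (sub_nonpos.2 hy) hα.le)
    have he_pos := exp_pos ((y - x) / α)
    rw [Real.norm_of_nonneg (by positivity)]
    nlinarith [mul_le_mul_of_nonneg_right he_le (by positivity : 0 ≤ (α ^ 2 / 2) * u' y ^ 2),
      mul_le_mul_of_nonneg_right he_le (sq_nonneg (u y)), mul_nonneg he_pos.le (sq_nonneg (u y - k))]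

theorem dgh_convolution_estimate_Iic (hα : 0 < α) (k : ℝ) {u u' : ℝ → ℝ} {L : ℝ}
    (hderiv : ∀ y, HasDerivAt u (u' y) y) (hu_sq : Integrable fun y => u y ^ 2)
    (hu'_sq : Integrable fun y => u' y ^ 2) (hbot : Tendsto u atBot (𝓝 L)) (x : ℝ) :
    (u x + k) ^ 2 / 4 ≤ 1 / (2 * α) *
      ∫ y in Iic x, exp ((y - x) / α) * ((α ^ 2 / 2) * u' y ^ 2 + (u y + k) ^ 2) := by
  have hu : Continuous u := continuous_iff_continuousAt.2 fun y => (hderiv y).continuousAt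
  have h := sq_le_two_div_mul_integral_Iic hα (w := fun y => u y + k)
    (fun y _ => (hderiv y).add_const k) (hbot.add_const k)
    (integrableOn_exp_mul_energy_Iic hα k x hu hu_sq hu'_sq)
  calc (u x + k) ^ 2 / 4 ≤ (2 / α * ∫ y in Iic x, exp ((y - x) / α) *
        ((α ^ 2 / 2) * u' y ^ 2 + (u y + k) ^ 2)) / 4 := by gcongr
    _ = _ := by field_simp; ring

end

theorem dgh_convolution_estimate_one_sided_general
    (α k : ℝ) (hα : 0 < α)
    (u u' : ℝ → ℝ)
    (hderiv : ∀ x, HasDerivAt u (u' x) x)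
    (hu_sq : Integrable (fun y => (u y) ^ 2))
    (hu'_sq : Integrable (fun y => (u' y) ^ 2))
    (hbot : Tendsto u atBot (nhds 0))
    (htop : Tendsto u atTop (nhds 0)) :
    ∀ x : ℝ,
      ((1 / (2 * α)) * ∫ y in Set.Iic x,
          Real.exp ((y - x) / α) *
            ((α ^ 2 / 2) * (u' y) ^ 2 + (u y + k) ^ 2)
        ≥ (u x + k) ^ 2 / 4) ∧
      ((1 / (2 * α)) * ∫ y in Set.Ici x,
          Real.exp ((x - y) / α) *
            ((α ^ 2 / 2) * (u' y) ^ 2 + (u y + k) ^ 2)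
        ≥ (u x + k) ^ 2 / 4) := by
  have hderiv_neg : ∀ y, HasDerivAt (fun z => u (-z)) (-u' (-y)) y := fun y => by
    simpa [Function.comp_def] using (hderiv (-y)).comp y (hasDerivAt_neg y)
  intro x
  refine ⟨dgh_convolution_estimate_Iic hα k hderiv hu_sq hu'_sq hbot x, ?_⟩
  have h := dgh_convolution_estimate_Iic hα k hderiv_neg hu_sq.comp_neg
    (by simpa using hu'_sq.comp_neg) (htop.comp tendsto_neg_atBot_atTop) (-x)
  rw [← integral_comp_neg_Ioi] at h
  rw [ge_iff_le, integral_Ici_eq_integral_Ioi]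
  simpa [neg_add_eq_sub] using h

/-- The two one-sided halves of Lemma 3.2:
`(p·1_{(0,∞)}) ∗ ((α²/2)uₓ² + (u+k)²) ≥ (u+k)²/4` and
`(p·1_{(-∞,0)}) ∗ ((α²/2)uₓ² + (u+k)²) ≥ (u+k)²/4`. -/
theorem dgh_convolution_estimate_one_sided
    (α k : ℝ) (hα : 0 < α)
    (u u' : ℝ → ℝ)
    (hderiv : ∀ x, HasDerivAt u (u' x) x)
    (hcont : Continuous u')
    (hu_sq : Integrable (fun y => (u y) ^ 2))
    (hu'_sq : Integrable (fun y => (u' y) ^ 2))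
    (hbot : Tendsto u atBot (nhds 0))
    (htop : Tendsto u atTop (nhds 0)) :
    ∀ x : ℝ,
      ((1 / (2 * α)) * ∫ y in Set.Iic x,
          Real.exp ((y - x) / α) *
            ((α ^ 2 / 2) * (u' y) ^ 2 + (u y + k) ^ 2)
        ≥ (u x + k) ^ 2 / 4) ∧
      ((1 / (2 * α)) * ∫ y in Set.Ici x,
          Real.exp ((x - y) / α) *
            ((α ^ 2 / 2) * (u' y) ^ 2 + (u y + k) ^ 2)
        ≥ (u x + k) ^ 2 / 4) :=
  dgh_convolution_estimate_one_sided_general α k hα u u' hderiv hu_sq hu'_sq hbot htop
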